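/- arXiv:math/9301217 — 2 statements merged into one kernel-verified Lean document; each statement's English description precedes it below -/
import Mathlib

section
/- For every m, n ∈ ℕ and α > 0, the minimal uniform approximation error of |x|^(2α) on [-1,1] by rational functions of numerator degree ≤ 2m and denominator degree ≤ 2n equals the minimal uniform approximation error of x^α on [0,1] by rational functions of numerator degree ≤ m and denominator degree ≤ n. -/
open Real Filter Polynomial

noncomputable def ratErr (f : ℝ → ℝ) (a b : ℝ) (m n : ℕ) : ℝ :=
  sInf {e : ℝ | ∃ p q : Polynomial ℝ, p.degree ≤ m ∧ q.degree ≤ n ∧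
    (∀ x ∈ Set.Icc a b, q.eval x ≠ 0) ∧
    e = ⨆ x : Set.Icc a b, |f ↑x - p.eval ↑x / q.eval ↑x|}

lemma sum_range_even_odd (g : ℕ → ℝ) (m : ℕ) :
    ∑ j ∈ Finset.range (2*(m+1)), g j
      = ∑ k ∈ Finset.range (m+1), (g (2*k) + g (2*k+1)) := by
  induction m with
  | zero => simp [Finset.sum_range_succ]
  | succ m ih =>
    rw [Finset.sum_range_succ, ← ih, show 2*(m+1+1) = (2*(m+1)) + 1 + 1 by ring,
      Finset.sum_range_succ, Finset.sum_range_succ]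
    ring_nf

lemma even_odd_decomp (P : Polynomial ℝ) (m : ℕ) (hP : P.degree ≤ (2*m : ℕ)) :
    ∃ p₀ p₁ : Polynomial ℝ, p₀.degree ≤ m ∧ p₁.degree ≤ m ∧
      ∀ x : ℝ, P.eval x = p₀.eval (x^2) + x * p₁.eval (x^2) := by
  refine ⟨∑ k ∈ Finset.range (m+1), Polynomial.C (P.coeff (2*k)) * Polynomial.X^k,
          ∑ k ∈ Finset.range (m+1), Polynomial.C (P.coeff (2*k+1)) * Polynomial.X^k, ?_, ?_, ?_⟩
  · refine (Polynomial.degree_sum_le _ _).trans ?_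
    apply Finset.sup_le
    intro k hk
    exact (Polynomial.degree_C_mul_X_pow_le _ _).trans
      (by exact_mod_cast Nat.cast_le.mpr (Nat.lt_succ_iff.mp (Finset.mem_range.mp hk)))
  · refine (Polynomial.degree_sum_le _ _).trans ?_
    apply Finset.sup_le
    intro k hk
    exact (Polynomial.degree_C_mul_X_pow_le _ _).trans
      (by exact_mod_cast Nat.cast_le.mpr (Nat.lt_succ_iff.mp (Finset.mem_range.mp hk)))
  · intro x
    have hnd : P.natDegree < 2*(m+1) := by
      have := Polynomial.natDegree_le_iff_degree_le.mpr hP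
      omega
    rw [Polynomial.eval_eq_sum_range' hnd, sum_range_even_odd (fun j => P.coeff j * x^j) m]
    simp only [Polynomial.eval_finset_sum, Polynomial.eval_mul, Polynomial.eval_C,
      Polynomial.eval_pow, Polynomial.eval_X, Finset.mul_sum, ← Finset.sum_add_distrib]
    apply Finset.sum_congr rfl
    intro k _
    ring

lemma poly_sign (Q : Polynomial ℝ) (h : ∀ x ∈ Set.Icc (-1:ℝ) 1, Q.eval x ≠ 0) :
    (∀ x ∈ Set.Icc (-1:ℝ) 1, 0 < Q.eval x) ∨ (∀ x ∈ Set.Icc (-1:ℝ) 1, Q.eval x < 0) := by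
  by_contra hc
  push_neg at hc
  obtain ⟨⟨a, ha, ha'⟩, ⟨b, hb, hb'⟩⟩ := hc
  have ha2 : Q.eval a < 0 := lt_of_le_of_ne ha' (h a ha)
  have hb2 : 0 < Q.eval b := lt_of_le_of_ne hb' (Ne.symm (h b hb))
  rcases le_total a b with hab | hab
  · obtain ⟨c, hc1, hc2⟩ := intermediate_value_Icc hab (Q.continuousOn)
      ⟨ha2.le, hb2.le⟩
    exact h c (Set.Icc_subset_Icc ha.1 hb.2 hc1) hc2
  · obtain ⟨c, hc1, hc2⟩ := intermediate_value_Icc' hab (Q.continuousOn)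
      ⟨ha2.le, hb2.le⟩
    exact h c (Set.Icc_subset_Icc hb.1 ha.2 hc1) hc2

lemma sup_sq (g : ℝ → ℝ) :
    (⨆ x : Set.Icc (-1:ℝ) 1, g ((x:ℝ)^2)) = ⨆ t : Set.Icc (0:ℝ) 1, g (t:ℝ) := by
  rw [iSup, iSup]
  apply congrArg
  ext y
  simp only [Set.mem_range]
  constructor
  · rintro ⟨⟨x, hx⟩, rfl⟩
    exact ⟨⟨x^2, ⟨sq_nonneg x, by nlinarith [hx.1, hx.2]⟩⟩, rfl⟩
  · rintro ⟨⟨t, ht⟩, rfl⟩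
    refine ⟨⟨Real.sqrt t, ⟨by linarith [Real.sqrt_nonneg t], Real.sqrt_le_one.mpr ht.2⟩⟩, ?_⟩
    simp [Real.sq_sqrt ht.1]

lemma abs_rpow_two_mul (α x : ℝ) : |x| ^ (2*α) = (x^2) ^ α := by
  rw [← sq_abs, ← Real.rpow_natCast |x| 2, ← Real.rpow_mul (abs_nonneg x)]
  norm_num

section dirs
variable (m n : ℕ) (α : ℝ)

def S1 (m n : ℕ) (α : ℝ) : Set ℝ := {e : ℝ | ∃ p q : Polynomial ℝ,
    p.degree ≤ (2*m : ℕ) ∧ q.degree ≤ (2*n : ℕ) ∧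
    (∀ x ∈ Set.Icc (-1:ℝ) 1, q.eval x ≠ 0) ∧
    e = ⨆ x : Set.Icc (-1:ℝ) 1, |abs (x:ℝ) ^ (2*α) - p.eval (x:ℝ) / q.eval (x:ℝ)|}

def S2 (m n : ℕ) (α : ℝ) : Set ℝ := {e : ℝ | ∃ p q : Polynomial ℝ,
    p.degree ≤ (m : ℕ) ∧ q.degree ≤ (n : ℕ) ∧
    (∀ x ∈ Set.Icc (0:ℝ) 1, q.eval x ≠ 0) ∧
    e = ⨆ x : Set.Icc (0:ℝ) 1, |(x:ℝ) ^ α - p.eval (x:ℝ) / q.eval (x:ℝ)|}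

lemma bdd₁ : BddBelow (S1 m n α) := by
  refine ⟨0, ?_⟩
  rintro e ⟨p, q, -, -, -, he⟩
  rw [he]
  exact Real.iSup_nonneg fun x => abs_nonneg _

lemma bdd₂ : BddBelow (S2 m n α) := by
  refine ⟨0, ?_⟩
  rintro e ⟨p, q, -, -, -, he⟩
  rw [he]
  exact Real.iSup_nonneg fun x => abs_nonneg _

lemma ne₁ : Set.Nonempty (S1 m n α) := by
  refine ⟨⨆ x : Set.Icc (-1:ℝ) 1,
      |abs (x:ℝ) ^ (2*α) - (0:Polynomial ℝ).eval (x:ℝ) / (1:Polynomial ℝ).eval (x:ℝ)|,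
    0, 1, ?_, ?_, ?_, rfl⟩
  · simp
  · simp [Polynomial.degree_one]
  · simp

lemma ne₂ : Set.Nonempty (S2 m n α) := by
  refine ⟨⨆ x : Set.Icc (0:ℝ) 1,
      |(x:ℝ) ^ α - (0:Polynomial ℝ).eval (x:ℝ) / (1:Polynomial ℝ).eval (x:ℝ)|,
    0, 1, ?_, ?_, ?_, rfl⟩
  · simp
  · simp [Polynomial.degree_one]
  · simp

lemma dir1 : sInf (S1 m n α) ≤ sInf (S2 m n α) := by
  apply csInf_le_csInf (bdd₁ m n α) (ne₂ m n α)
  rintro e ⟨p, q, hp, hq, hqn, he⟩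
  refine ⟨p.comp (Polynomial.X^2), q.comp (Polynomial.X^2), ?_, ?_, ?_, ?_⟩
  · rw [← Polynomial.natDegree_le_iff_degree_le] at hp ⊢
    rw [Polynomial.natDegree_comp, Polynomial.natDegree_X_pow]
    omega
  · rw [← Polynomial.natDegree_le_iff_degree_le] at hq ⊢
    rw [Polynomial.natDegree_comp, Polynomial.natDegree_X_pow]
    omega
  · intro x hx
    rw [Polynomial.eval_comp]
    simp only [Polynomial.eval_pow, Polynomial.eval_X]
    exact hqn _ ⟨sq_nonneg x, by nlinarith [hx.1, hx.2]⟩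
  · rw [he]
    have h2 : (fun x : Set.Icc (-1:ℝ) 1 =>
        |abs (x:ℝ) ^ (2*α) - (p.comp (Polynomial.X^2)).eval (x:ℝ) /
          (q.comp (Polynomial.X^2)).eval (x:ℝ)|)
        = fun x : Set.Icc (-1:ℝ) 1 =>
          (fun t : ℝ => |t ^ α - p.eval t / q.eval t|) ((x:ℝ)^2) := by
      funext x
      simp only [Polynomial.eval_comp, Polynomial.eval_pow, Polynomial.eval_X,
        abs_rpow_two_mul]
    rw [h2, sup_sq (fun t : ℝ => |t ^ α - p.eval t / q.eval t|)]

lemma dir2 (hα : 0 < α) : sInf (S2 m n α) ≤ sInf (S1 m n α) := by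
  apply le_csInf (ne₁ m n α)
  rintro e ⟨P, Q, hP, hQ, hQn, he⟩
  haveI hne01 : Nonempty (Set.Icc (0:ℝ) 1) := ⟨⟨0, by norm_num⟩⟩
  -- normalize sign of Q
  obtain ⟨P', Q', hP', hQ', hpos, hquot⟩ :
      ∃ P' Q' : Polynomial ℝ, P'.degree ≤ (2*m:ℕ) ∧ Q'.degree ≤ (2*n:ℕ) ∧
        (∀ x ∈ Set.Icc (-1:ℝ) 1, 0 < Q'.eval x) ∧
        (∀ x : ℝ, P'.eval x / Q'.eval x = P.eval x / Q.eval x) := by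
    rcases poly_sign Q hQn with h | h
    · exact ⟨P, Q, hP, hQ, h, fun x => rfl⟩
    · refine ⟨-P, -Q, by simpa using hP, by simpa using hQ, ?_, ?_⟩
      · intro x hx
        simpa using h x hx
      · intro x
        simp [neg_div_neg_eq]
  have he' : e = ⨆ x : Set.Icc (-1:ℝ) 1,
      |abs (x:ℝ) ^ (2*α) - P'.eval (x:ℝ) / Q'.eval (x:ℝ)| := by
    rw [he]
    congr 1
    funext x
    rw [hquot]
  obtain ⟨p₀, p₁, hp₀, hp₁, hPdec⟩ := even_odd_decomp P' m hP'
  obtain ⟨q₀, q₁, hq₀, hq₁, hQdec⟩ := even_odd_decomp Q' n hQ'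
  have hbA : BddAbove (Set.range fun x : Set.Icc (-1:ℝ) 1 =>
      |abs (x:ℝ) ^ (2*α) - P'.eval (x:ℝ) / Q'.eval (x:ℝ)|) := by
    have hcont : ContinuousOn
        (fun y : ℝ => |abs y ^ (2*α) - P'.eval y / Q'.eval y|) (Set.Icc (-1:ℝ) 1) := by
      apply ContinuousOn.abs
      apply ContinuousOn.sub
      · exact (continuous_abs.rpow_const (fun x => Or.inr (by positivity))).continuousOn
      · exact (P'.continuousOn).div (Q'.continuousOn) (fun x hx => (hpos x hx).ne')
    have hb := (isCompact_Icc.image_of_continuousOn hcont).bddAbove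
    rwa [Set.image_eq_range] at hb
  have key : ∀ t ∈ Set.Icc (0:ℝ) 1,
      |t ^ α - p₀.eval t / q₀.eval t| ≤ e ∧ 0 < q₀.eval t := by
    intro t ht
    set s := Real.sqrt t with hs
    have hs2 : s^2 = t := Real.sq_sqrt ht.1
    have hsnn : 0 ≤ s := Real.sqrt_nonneg t
    have hsmem : s ∈ Set.Icc (-1:ℝ) 1 := ⟨by linarith, Real.sqrt_le_one.mpr ht.2⟩
    have hsmem' : -s ∈ Set.Icc (-1:ℝ) 1 := ⟨by linarith [hsmem.2], by linarith⟩
    have hQs : 0 < Q'.eval s := hpos s hsmem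
    have hQs' : 0 < Q'.eval (-s) := hpos (-s) hsmem'
    have hPs : P'.eval s = p₀.eval t + s * p₁.eval t := by rw [hPdec s, hs2]
    have hPs' : P'.eval (-s) = p₀.eval t - s * p₁.eval t := by
      rw [hPdec (-s), neg_sq, hs2]; ring
    have hQsdec : Q'.eval s = q₀.eval t + s * q₁.eval t := by rw [hQdec s, hs2]
    have hQsdec' : Q'.eval (-s) = q₀.eval t - s * q₁.eval t := by
      rw [hQdec (-s), neg_sq, hs2]; ring
    have hq0pos : 0 < q₀.eval t := by
      rw [hQsdec] at hQs; rw [hQsdec'] at hQs'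
      linarith
    refine ⟨?_, hq0pos⟩
    have hA : |t ^ α - P'.eval s / Q'.eval s| ≤ e := by
      have h1 := le_ciSup hbA (⟨s, hsmem⟩ : Set.Icc (-1:ℝ) 1)
      rw [← he'] at h1
      simp only at h1
      rwa [abs_rpow_two_mul, hs2] at h1
    have hB : |t ^ α - P'.eval (-s) / Q'.eval (-s)| ≤ e := by
      have h1 := le_ciSup hbA (⟨-s, hsmem'⟩ : Set.Icc (-1:ℝ) 1)
      rw [← he'] at h1
      simp only at h1
      rwa [abs_rpow_two_mul, neg_sq, hs2] at h1
    have hA' : |t ^ α * Q'.eval s - P'.eval s| ≤ e * Q'.eval s := by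
      rw [show t ^ α - P'.eval s / Q'.eval s
          = (t ^ α * Q'.eval s - P'.eval s) / Q'.eval s by field_simp,
        abs_div, abs_of_pos hQs, div_le_iff₀ hQs] at hA
      exact hA
    have hB' : |t ^ α * Q'.eval (-s) - P'.eval (-s)| ≤ e * Q'.eval (-s) := by
      rw [show t ^ α - P'.eval (-s) / Q'.eval (-s)
          = (t ^ α * Q'.eval (-s) - P'.eval (-s)) / Q'.eval (-s) by field_simp,
        abs_div, abs_of_pos hQs', div_le_iff₀ hQs'] at hB
      exact hB
    have hsum : (t ^ α * Q'.eval s - P'.eval s) + (t ^ α * Q'.eval (-s) - P'.eval (-s))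
        = 2 * (t ^ α * q₀.eval t - p₀.eval t) := by
      rw [hPs, hPs', hQsdec, hQsdec']; ring
    have habs : |2 * (t ^ α * q₀.eval t - p₀.eval t)|
        ≤ e * Q'.eval s + e * Q'.eval (-s) := by
      rw [← hsum]
      exact (abs_add_le _ _).trans (add_le_add hA' hB')
    rw [abs_mul, abs_two] at habs
    have hEq : e * Q'.eval s + e * Q'.eval (-s) = 2 * (e * q₀.eval t) := by
      rw [hQsdec, hQsdec']; ring
    rw [hEq] at habs
    have hkey : |t ^ α * q₀.eval t - p₀.eval t| ≤ e * q₀.eval t := by linarith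
    rw [show t ^ α - p₀.eval t / q₀.eval t
        = (t ^ α * q₀.eval t - p₀.eval t) / q₀.eval t by field_simp,
      abs_div, abs_of_pos hq0pos, div_le_iff₀ hq0pos]
    exact hkey
  have hmem : (⨆ t : Set.Icc (0:ℝ) 1,
      |(t:ℝ) ^ α - p₀.eval (t:ℝ) / q₀.eval (t:ℝ)|) ∈ S2 m n α :=
    ⟨p₀, q₀, hp₀, hq₀, fun t ht => ((key t ht).2).ne', rfl⟩
  refine (csInf_le (bdd₂ m n α) hmem).trans ?_
  apply ciSup_le
  rintro ⟨t, ht⟩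
  exact (key t ht).1

end dirs

theorem stmt0 (m n : ℕ) (α : ℝ) (hα : 0 < α) :
    ratErr (fun x => |x| ^ (2 * α)) (-1) 1 (2 * m) (2 * n)
      = ratErr (fun x => x ^ α) 0 1 m n := by
  rw [ratErr, ratErr]
  exact le_antisymm (dir1 m n α) (dir2 m n α hα)
end

section
/- For each α ∈ ℝ₊ \ ℕ, the minimal polynomial approximation error satisfies E_{m,0}(|x|^α, [-1,1]) = O(m^{-α}) as m → ∞. -/
open Real Filter Polynomial

/-!
For `2n < α < 2n + 2` the integral
`K(n, α) = ∫₀^∞ (cos u - ∑_{j ≤ n} (-1)^j u^{2j}/(2j)!) u^{-1-α} du`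
converges and is nonzero: two integrations by parts give `K(n, α - 2) = α (1 - α) K(n + 1, α)`, and
for `n = 0` the integrand `(cos u - 1) u^{-1-α}` is negative.

Substituting `u = x t` gives `K(n, α) x^α = ∫₀^∞ (cos (x t) - ∑_{j ≤ n} …) t^{-1-α} dt` for `x ≥ 0`.
Split the integral at `T`. On `(0, T]` write the remainder of order `n` as the remainder of order
`J ≥ n` plus monomials, and on `(T, ∞)` write it as `cos (x t)` minus monomials. The monomials
integrate to an even polynomial of degree `2J` in `x`. What is left is at most
`T^{2J+2-α} / ((2J+2-α) (2J+2)!) + T^{-α} / α` for `0 ≤ x ≤ 1`. Take `J = ⌊m/2⌋` and `T = m/3`: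
since `T^N / N! ≤ e^{eT - N} ≤ 1`, both terms are `O(m^{-α})`.
-/

open MeasureTheory Set
open scoped Nat Topology

noncomputable def cosTerm (j : ℕ) (u : ℝ) : ℝ := (-1) ^ j * (u ^ (2 * j) / (2 * j)!)

noncomputable def cosTaylor (n : ℕ) (u : ℝ) : ℝ := ∑ j ∈ Finset.range n, cosTerm j u

noncomputable def sinTaylor (n : ℕ) (u : ℝ) : ℝ :=
  ∑ j ∈ Finset.range n, (-1) ^ j * (u ^ (2 * j + 1) / (2 * j + 1)!)

noncomputable def cosRem (n : ℕ) (u : ℝ) : ℝ := cos u - cosTaylor n u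

noncomputable def sinRem (n : ℕ) (u : ℝ) : ℝ := sin u - sinTaylor n u

theorem hasDerivAt_pow_succ_div_factorial (k : ℕ) (u : ℝ) :
    HasDerivAt (fun u : ℝ => u ^ (k + 1) / (k + 1)!) (u ^ k / k !) u := by
  refine ((hasDerivAt_pow (k + 1) u).div_const ((k + 1)! : ℝ)).congr_deriv ?_
  rw [Nat.factorial_succ]
  push_cast
  field_simp

theorem hasDerivAt_sinTaylor (n : ℕ) (u : ℝ) : HasDerivAt (sinTaylor n) (cosTaylor n u) u :=
  HasDerivAt.fun_sum fun j _ => (hasDerivAt_pow_succ_div_factorial (2 * j) u).const_mul _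

theorem cosTaylor_succ (n : ℕ) (u : ℝ) :
    cosTaylor (n + 1) u
      = 1 - ∑ j ∈ Finset.range n, (-1) ^ j * (u ^ (2 * j + 1 + 1) / (2 * j + 1 + 1)!) := by
  rw [cosTaylor, Finset.sum_range_succ', add_comm, sub_eq_add_neg, ← Finset.sum_neg_distrib]
  simp only [cosTerm, mul_zero, pow_zero, Nat.factorial_zero, Nat.cast_one, div_one, mul_one]
  congr 1
  refine Finset.sum_congr rfl fun j _ => ?_
  rw [show 2 * (j + 1) = 2 * j + 1 + 1 by ring]
  ring

theorem hasDerivAt_cosTaylor_succ (n : ℕ) (u : ℝ) :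
    HasDerivAt (cosTaylor (n + 1)) (-sinTaylor n u) u := by
  rw [funext (cosTaylor_succ n), sinTaylor]
  exact ((hasDerivAt_const u 1).sub (HasDerivAt.fun_sum fun j _ =>
    (hasDerivAt_pow_succ_div_factorial (2 * j + 1) u).const_mul _)).congr_deriv (zero_sub _)

theorem hasDerivAt_sinRem (n : ℕ) (u : ℝ) : HasDerivAt (sinRem n) (cosRem n u) u :=
  (hasDerivAt_sin u).sub (hasDerivAt_sinTaylor n u)

theorem hasDerivAt_cosRem_succ (n : ℕ) (u : ℝ) :
    HasDerivAt (cosRem (n + 1)) (-sinRem n u) u := by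
  refine ((hasDerivAt_cos u).sub (hasDerivAt_cosTaylor_succ n u)).congr_deriv ?_
  rw [sinRem]; ring

theorem continuous_cosRem (n : ℕ) : Continuous (cosRem n) := by
  unfold cosRem cosTaylor cosTerm; fun_prop

theorem continuous_sinRem (n : ℕ) : Continuous (sinRem n) := by
  unfold sinRem sinTaylor; fun_prop

theorem cosRem_succ_zero (n : ℕ) : cosRem (n + 1) 0 = 0 := by
  simp [cosRem, cosTaylor_succ]

theorem sinRem_zero (n : ℕ) : sinRem n 0 = 0 := by
  simp [sinRem, sinTaylor]

theorem abs_le_pow_succ_div_factorial {f f' : ℝ → ℝ} {k : ℕ}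
    (hf : ∀ t, HasDerivAt f (f' t) t) (hf0 : f 0 = 0)
    (hf' : ∀ t, 0 ≤ t → |f' t| ≤ t ^ k / k !) {u : ℝ} (hu : 0 ≤ u) :
    |f u| ≤ u ^ (k + 1) / (k + 1)! := by
  have key : ∀ s : ℝ, |s| = 1 → s * f u ≤ u ^ (k + 1) / (k + 1)! := by
    intro s hs
    have hmono : MonotoneOn (fun t => t ^ (k + 1) / (k + 1)! - s * f t) (Ici 0) := by
      have hderiv t := (hasDerivAt_pow_succ_div_factorial k t).sub ((hf t).const_mul s)
      refine monotoneOn_of_hasDerivWithinAt_nonneg (convex_Ici 0)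
        (fun t _ => (hderiv t).continuousAt.continuousWithinAt)
        (fun t _ => (hderiv t).hasDerivWithinAt) fun t ht => ?_
      rw [interior_Ici] at ht
      have : |s * f' t| = |f' t| := by rw [abs_mul, hs, one_mul]
      linarith [hf' t ht.le, le_abs_self (s * f' t)]
    have := hmono self_mem_Ici hu hu
    simp [hf0] at this
    linarith
  exact abs_le.mpr ⟨by linarith [key (-1) (by simp)], by linarith [key 1 (by simp)]⟩

theorem abs_cosRem_le_and_abs_sinRem_le (n : ℕ) :
    (∀ u, 0 ≤ u → |cosRem n u| ≤ u ^ (2 * n) / (2 * n)!) ∧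
      ∀ u, 0 ≤ u → |sinRem n u| ≤ u ^ (2 * n + 1) / (2 * n + 1)! := by
  suffices hcos : ∀ u, 0 ≤ u → |cosRem n u| ≤ u ^ (2 * n) / (2 * n)! from
    ⟨hcos, fun u => abs_le_pow_succ_div_factorial (hasDerivAt_sinRem n) (sinRem_zero n) hcos⟩
  induction n with
  | zero => simpa [cosRem, cosTaylor] using fun u _ => abs_cos_le_one u
  | succ n ih =>
    intro u hu
    have hsin t (ht : 0 ≤ t) :=
      abs_le_pow_succ_div_factorial (hasDerivAt_sinRem n) (sinRem_zero n) ih ht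
    simpa only [show 2 * n + 1 + 1 = 2 * (n + 1) by ring] using
      abs_le_pow_succ_div_factorial (hasDerivAt_cosRem_succ n) (cosRem_succ_zero n)
        (fun t ht => (abs_neg (sinRem n t)).trans_le (hsin t ht)) hu

theorem abs_cosRem_le (n : ℕ) {u : ℝ} (hu : 0 ≤ u) : |cosRem n u| ≤ u ^ (2 * n) / (2 * n)! :=
  (abs_cosRem_le_and_abs_sinRem_le n).1 u hu

theorem abs_sinRem_le (n : ℕ) {u : ℝ} (hu : 0 ≤ u) :
    |sinRem n u| ≤ u ^ (2 * n + 1) / (2 * n + 1)! :=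
  (abs_cosRem_le_and_abs_sinRem_le n).2 u hu

theorem abs_sub_alternating_sum_le {u c : ℝ} (hu : 1 ≤ u) (hc : |c| ≤ 1) (N : ℕ) {e : ℕ → ℕ}
    {E : ℕ} (he : ∀ j < N, e j ≤ E) :
    |c - ∑ j ∈ Finset.range N, (-1) ^ j * (u ^ e j / (e j)!)| ≤ (N + 1) * u ^ E := by
  have hsum : |∑ j ∈ Finset.range N, (-1) ^ j * (u ^ e j / (e j)!)| ≤ N * u ^ E :=
    calc _ ≤ ∑ j ∈ Finset.range N, |(-1) ^ j * (u ^ e j / (e j)!)| :=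
          Finset.abs_sum_le_sum_abs _ _
      _ ≤ ∑ _j ∈ Finset.range N, u ^ E := Finset.sum_le_sum fun j hj => by
          rw [abs_mul, abs_pow, abs_neg, abs_one, one_pow, one_mul,
            abs_of_nonneg (by positivity)]
          exact (div_le_self (by positivity) (by exact_mod_cast Nat.factorial_pos _)).trans
            (pow_le_pow_right₀ hu (he j (Finset.mem_range.mp hj)))
      _ = N * u ^ E := by simp
  linarith [abs_sub c (∑ j ∈ Finset.range N, (-1) ^ j * (u ^ e j / (e j)!)),
    one_le_pow₀ (n := E) hu]

theorem abs_cosRem_succ_le_of_one_le (n : ℕ) {u : ℝ} (hu : 1 ≤ u) :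
    |cosRem (n + 1) u| ≤ (n + 2) * u ^ (2 * n) := by
  simp only [cosRem, cosTaylor, cosTerm]
  exact (abs_sub_alternating_sum_le hu (abs_cos_le_one u) (n + 1) (e := fun j => 2 * j)
    (E := 2 * n) fun j hj => by omega).trans_eq (by push_cast; ring)

theorem abs_sinRem_succ_le_of_one_le (n : ℕ) {u : ℝ} (hu : 1 ≤ u) :
    |sinRem (n + 1) u| ≤ (n + 2) * u ^ (2 * n + 1) := by
  rw [sinRem, sinTaylor]
  exact (abs_sub_alternating_sum_le hu (abs_sin_le_one u) (n + 1) (e := fun j => 2 * j + 1)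
    (E := 2 * n + 1) fun j hj => by omega).trans_eq (by push_cast; ring)

theorem continuousOn_mul_rpow {f : ℝ → ℝ} (hf : Continuous f) (p : ℝ) :
    ContinuousOn (fun u => f u * u ^ p) (Ioi 0) :=
  hf.continuousOn.mul (continuousOn_id.rpow_const fun _ hu => Or.inl (ne_of_gt hu))

theorem abs_mul_rpow_le {b C u p : ℝ} {k : ℕ} (hu : 0 < u) (hb : |b| ≤ C * u ^ k) :
    |b * u ^ p| ≤ C * u ^ (k + p) := by
  rw [abs_mul, abs_of_pos (rpow_pos_of_pos hu p), rpow_add hu, rpow_natCast, ← mul_assoc]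
  exact mul_le_mul_of_nonneg_right hb (rpow_pos_of_pos hu p).le

theorem integrableOn_Ioc_zero_of_abs_le_rpow {f : ℝ → ℝ} {C a T : ℝ}
    (hf : ContinuousOn f (Ioi 0)) (ha : -1 < a) (hT : 0 ≤ T)
    (h : ∀ u ∈ Ioc 0 T, |f u| ≤ C * u ^ a) : IntegrableOn f (Ioc 0 T) :=
  ((intervalIntegrable_iff_integrableOn_Ioc_of_le hT).mp
      ((intervalIntegral.intervalIntegrable_rpow' ha).const_mul C)).mono'
    ((hf.mono Ioc_subset_Ioi_self).aestronglyMeasurable measurableSet_Ioc)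
    ((ae_restrict_iff' measurableSet_Ioc).2 (Eventually.of_forall h))

theorem integrableOn_Ioi_of_abs_le_rpow {f : ℝ → ℝ} {C b T : ℝ}
    (hf : ContinuousOn f (Ioi T)) (hb : b < -1) (hT : 0 < T)
    (h : ∀ u ∈ Ioi T, |f u| ≤ C * u ^ b) : IntegrableOn f (Ioi T) :=
  ((integrableOn_Ioi_rpow_of_lt hb hT).const_mul C).mono'
    (hf.aestronglyMeasurable measurableSet_Ioi)
    ((ae_restrict_iff' measurableSet_Ioi).2 (Eventually.of_forall h))

theorem integrableOn_Ioi_zero_of_abs_le_rpow {f : ℝ → ℝ} {C₀ C₁ a b : ℝ}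
    (hf : ContinuousOn f (Ioi 0)) (ha : -1 < a) (hb : b < -1)
    (h₀ : ∀ u ∈ Ioc 0 1, |f u| ≤ C₀ * u ^ a) (h₁ : ∀ u ∈ Ioi 1, |f u| ≤ C₁ * u ^ b) :
    IntegrableOn f (Ioi 0) := by
  rw [← Ioc_union_Ioi_eq_Ioi zero_le_one]
  exact (integrableOn_Ioc_zero_of_abs_le_rpow hf ha zero_le_one h₀).union
    (integrableOn_Ioi_of_abs_le_rpow (hf.mono (Ioi_subset_Ioi zero_le_one)) hb one_pos h₁)

theorem tendsto_nhdsGT_zero_of_abs_le_rpow {f : ℝ → ℝ} {C c : ℝ} (hc : 0 < c)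
    (h : ∀ u ∈ Ioi 0, |f u| ≤ C * u ^ c) : Tendsto f (𝓝[>] 0) (𝓝 0) := by
  have hlim : Tendsto (fun u : ℝ => C * u ^ c) (𝓝[>] 0) (𝓝 0) := by
    simpa [zero_rpow hc.ne'] using
      (((continuous_rpow_const hc.le).tendsto 0).mono_left nhdsWithin_le_nhds).const_mul C
  exact squeeze_zero_norm' (eventually_nhdsWithin_of_forall h) hlim

theorem tendsto_atTop_zero_of_abs_le_rpow {f : ℝ → ℝ} {C c : ℝ} (hc : c < 0)
    (h : ∀ u ∈ Ioi 1, |f u| ≤ C * u ^ c) : Tendsto f atTop (𝓝 0) := by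
  have hlim : Tendsto (fun u : ℝ => C * u ^ c) atTop (𝓝 0) := by
    simpa using (tendsto_rpow_neg_atTop (neg_pos.mpr hc)).const_mul C
  exact squeeze_zero_norm' ((eventually_gt_atTop 1).mono h) hlim

section RemainderBounds

variable (n : ℕ) (p : ℝ) {u : ℝ}

theorem abs_cosRem_comp_mul_mul_rpow_le {x : ℝ} (hx₀ : 0 ≤ x) (hx₁ : x ≤ 1) (hu : 0 < u) :
    |cosRem n (x * u) * u ^ p| ≤ ((2 * n)! : ℝ)⁻¹ * u ^ (2 * n + p) := by
  have hxu : 0 ≤ x * u := mul_nonneg hx₀ hu.le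
  have hb : |cosRem n (x * u)| ≤ ((2 * n)! : ℝ)⁻¹ * u ^ (2 * n) := by
    refine (abs_cosRem_le n hxu).trans ?_
    rw [div_eq_inv_mul]
    gcongr
    nlinarith
  exact_mod_cast abs_mul_rpow_le hu hb

theorem abs_cosRem_mul_rpow_le (hu : 0 < u) :
    |cosRem n u * u ^ p| ≤ ((2 * n)! : ℝ)⁻¹ * u ^ (2 * n + p) := by
  simpa only [one_mul] using abs_cosRem_comp_mul_mul_rpow_le n p zero_le_one le_rfl hu

theorem abs_sinRem_mul_rpow_le (hu : 0 < u) :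
    |sinRem n u * u ^ p| ≤ ((2 * n + 1)! : ℝ)⁻¹ * u ^ (2 * n + 1 + p) := by
  have hb : |sinRem n u| ≤ ((2 * n + 1)! : ℝ)⁻¹ * u ^ (2 * n + 1) := by
    rw [← div_eq_inv_mul]; exact abs_sinRem_le n hu.le
  exact_mod_cast abs_mul_rpow_le hu hb

theorem abs_cosRem_succ_mul_rpow_le (hu : 1 ≤ u) :
    |cosRem (n + 1) u * u ^ p| ≤ (n + 2) * u ^ (2 * n + p) := by
  exact_mod_cast abs_mul_rpow_le (zero_lt_one.trans_le hu) (abs_cosRem_succ_le_of_one_le n hu)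

theorem abs_sinRem_succ_mul_rpow_le (hu : 1 ≤ u) :
    |sinRem (n + 1) u * u ^ p| ≤ (n + 2) * u ^ (2 * n + 1 + p) := by
  exact_mod_cast abs_mul_rpow_le (zero_lt_one.trans_le hu) (abs_sinRem_succ_le_of_one_le n hu)

end RemainderBounds

section Mellin

noncomputable def cosRemMellin (n : ℕ) (α : ℝ) : ℝ := ∫ u in Ioi 0, cosRem n u * u ^ (-1 - α)

variable {n : ℕ} {α : ℝ}

theorem integrableOn_cosRem_succ_mul_rpow (hlo : 2 * n < α) (hhi : α < 2 * n + 2) :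
    IntegrableOn (fun u => cosRem (n + 1) u * u ^ (-1 - α)) (Ioi 0) :=
  integrableOn_Ioi_zero_of_abs_le_rpow (continuousOn_mul_rpow (continuous_cosRem _) _)
    (a := 2 * (n + 1 : ℕ) + (-1 - α)) (by push_cast; linarith) (b := 2 * n + (-1 - α))
    (by linarith) (fun _ hu => abs_cosRem_mul_rpow_le _ _ hu.1)
    (fun _ hu => abs_cosRem_succ_mul_rpow_le _ _ (le_of_lt hu))

theorem integrableOn_sinRem_succ_mul_rpow (hlo : 2 * n + 2 < α) (hhi : α < 2 * n + 4) :
    IntegrableOn (fun u => sinRem (n + 1) u * u ^ (-α)) (Ioi 0) :=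
  integrableOn_Ioi_zero_of_abs_le_rpow (continuousOn_mul_rpow (continuous_sinRem _) _)
    (a := 2 * (n + 1 : ℕ) + 1 + -α) (by push_cast; linarith) (b := 2 * n + 1 + -α)
    (by linarith) (fun _ hu => abs_sinRem_mul_rpow_le _ _ hu.1)
    (fun _ hu => abs_sinRem_succ_mul_rpow_le _ _ (le_of_lt hu))

theorem cosRemMellin_one_neg (h0 : 0 < α) (h2 : α < 2) : cosRemMellin 1 α < 0 := by
  set f : ℝ → ℝ := fun u => (1 - cos u) * u ^ (-1 - α)
  have hf_eq : ∀ u, f u = -(cosRem 1 u * u ^ (-1 - α)) := fun u => by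
    simp [f, cosRem, cosTaylor, cosTerm]; ring
  have hf : IntegrableOn f (Ioi 0) :=
    IntegrableOn.congr_fun
      (integrableOn_cosRem_succ_mul_rpow (n := 0) (by simpa using h0) (by simpa using h2)).neg
      (fun u _ => (hf_eq u).symm) measurableSet_Ioi
  have hpos : 0 < ∫ u in (0)..π, f u :=
    intervalIntegral.intervalIntegral_pos_of_pos_on
      ((intervalIntegrable_iff_integrableOn_Ioc_of_le pi_pos.le).mpr
        (hf.mono_set Ioc_subset_Ioi_self))
      (fun u hu => mul_pos
        (sub_pos.mpr (cos_zero ▸ cos_lt_cos_of_nonneg_of_le_pi le_rfl hu.2.le hu.1))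
        (rpow_pos_of_pos hu.1 _)) pi_pos
  have hle : ∫ u in (0)..π, f u ≤ ∫ u in Ioi 0, f u := by
    rw [intervalIntegral.integral_of_le pi_pos.le]
    exact setIntegral_mono_set hf ((ae_restrict_iff' measurableSet_Ioi).2 (Eventually.of_forall
      fun u hu => mul_nonneg (sub_nonneg.mpr (cos_le_one u)) (rpow_pos_of_pos hu _).le))
      Ioc_subset_Ioi_self.eventuallyLE
  have hK : cosRemMellin 1 α = -∫ u in Ioi 0, f u := by
    rw [cosRemMellin, ← integral_neg]
    simp only [hf_eq, neg_neg]
  linarith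

theorem integral_sinRem_succ_mul_rpow (hlo : 2 * n + 2 < α) (hhi : α < 2 * n + 4) :
    ∫ u in Ioi 0, sinRem (n + 1) u * u ^ (-α) = -α * cosRemMellin (n + 2) α := by
  have huv : ∀ u : ℝ, cosRem (n + 2) u * (-α * u ^ (-α - 1))
      = -α * (cosRem (n + 2) u * u ^ (-1 - α)) := fun u => by ring_nf
  have hu'v : ∀ u : ℝ, -sinRem (n + 1) u * u ^ (-α) = -(sinRem (n + 1) u * u ^ (-α)) :=
    fun u => neg_mul _ _
  have hparts := integral_Ioi_mul_deriv_eq_deriv_mul (a' := 0) (b' := 0)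
    (u := cosRem (n + 2)) (v := fun t => t ^ (-α))
    (fun t _ => hasDerivAt_cosRem_succ (n + 1) t)
    (fun t ht => hasDerivAt_rpow_const (Or.inl (ne_of_gt ht)))
    (IntegrableOn.congr_fun ((integrableOn_cosRem_succ_mul_rpow (n := n + 1)
      (by push_cast; linarith) (by push_cast; linarith)).const_mul (-α))
        (fun u _ => (huv u).symm) measurableSet_Ioi)
    (IntegrableOn.congr_fun (integrableOn_sinRem_succ_mul_rpow hlo hhi).neg
        (fun u _ => (hu'v u).symm) measurableSet_Ioi)
    (tendsto_nhdsGT_zero_of_abs_le_rpow (c := 2 * (n + 2 : ℕ) + -α) (by push_cast; linarith)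
      fun u hu => abs_cosRem_mul_rpow_le _ _ hu)
    (tendsto_atTop_zero_of_abs_le_rpow (c := 2 * (n + 1 : ℕ) + -α) (by push_cast; linarith)
      fun u hu => abs_cosRem_succ_mul_rpow_le _ _ (le_of_lt hu))
  simp only [huv, hu'v, integral_const_mul, integral_neg, sub_zero, zero_sub, neg_neg] at hparts
  rw [cosRemMellin, hparts]

theorem cosRemMellin_sub_two (hlo : 2 * n + 2 < α) (hhi : α < 2 * n + 4) :
    cosRemMellin (n + 1) (α - 2) = α * (1 - α) * cosRemMellin (n + 2) α := by
  have huv : ∀ u : ℝ, sinRem (n + 1) u * ((1 - α) * u ^ (1 - α - 1))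
      = (1 - α) * (sinRem (n + 1) u * u ^ (-α)) := fun u => by ring_nf
  have hu'v : ∀ u : ℝ, cosRem (n + 1) u * u ^ (1 - α) = cosRem (n + 1) u * u ^ (-1 - (α - 2)) :=
    fun u => by ring_nf
  have hparts := integral_Ioi_mul_deriv_eq_deriv_mul (a' := 0) (b' := 0)
    (u := sinRem (n + 1)) (v := fun t => t ^ (1 - α))
    (fun t _ => hasDerivAt_sinRem (n + 1) t)
    (fun t ht => hasDerivAt_rpow_const (Or.inl (ne_of_gt ht)))
    (IntegrableOn.congr_fun ((integrableOn_sinRem_succ_mul_rpow hlo hhi).const_mul (1 - α))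
        (fun u _ => (huv u).symm) measurableSet_Ioi)
    (IntegrableOn.congr_fun (integrableOn_cosRem_succ_mul_rpow (α := α - 2) (by linarith)
      (by linarith)) (fun u _ => (hu'v u).symm) measurableSet_Ioi)
    (tendsto_nhdsGT_zero_of_abs_le_rpow (c := 2 * (n + 1 : ℕ) + 1 + (1 - α))
      (by push_cast; linarith) fun u hu => abs_sinRem_mul_rpow_le _ _ hu)
    (tendsto_atTop_zero_of_abs_le_rpow (c := 2 * n + 1 + (1 - α)) (by linarith)
      fun u hu => abs_sinRem_succ_mul_rpow_le _ _ (le_of_lt hu))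
  simp only [huv, hu'v, integral_const_mul, integral_sinRem_succ_mul_rpow hlo hhi, sub_zero,
    zero_sub] at hparts
  rw [cosRemMellin]
  linarith

theorem cosRemMellin_succ_ne_zero (hlo : 2 * n < α) (hhi : α < 2 * n + 2) :
    cosRemMellin (n + 1) α ≠ 0 := by
  induction n generalizing α with
  | zero => exact (cosRemMellin_one_neg (by simpa using hlo) (by simpa using hhi)).ne
  | succ n ih =>
    push_cast at hlo hhi
    have h := cosRemMellin_sub_two (n := n) (by linarith) (by linarith)
    intro hzero
    rw [hzero, mul_zero] at h
    exact ih (by linarith) (by linarith) h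

end Mellin

section MainEstimate

theorem integral_comp_mul_mul_rpow {f : ℝ → ℝ} {α x : ℝ} (hf : f 0 = 0) (hα : α ≠ 0)
    (hx : 0 ≤ x) :
    ∫ t in Ioi 0, f (x * t) * t ^ (-1 - α) = x ^ α * ∫ u in Ioi 0, f u * u ^ (-1 - α) := by
  rcases hx.eq_or_lt with rfl | hx
  · simp [hf, zero_rpow hα]
  have key : ∀ t ∈ Ioi (0 : ℝ),
      f (x * t) * t ^ (-1 - α) = x ^ (1 + α) * (f (x * t) * (x * t) ^ (-1 - α)) := by
    intro t ht
    have hx1 : x ^ (1 + α) * x ^ (-1 - α) = 1 := by rw [← rpow_add hx]; simp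
    rw [mul_rpow hx.le (le_of_lt ht)]
    linear_combination (-(f (x * t) * t ^ (-1 - α))) * hx1
  rw [setIntegral_congr_fun measurableSet_Ioi key, integral_const_mul,
    integral_comp_mul_left_Ioi (fun u => f u * u ^ (-1 - α)) 0 hx, mul_zero, smul_eq_mul,
    ← mul_assoc, ← rpow_neg_one, ← rpow_add hx]
  ring_nf

theorem integral_Ioc_zero_rpow {s T : ℝ} (hs : -1 < s) (hT : 0 ≤ T) :
    ∫ t in Ioc 0 T, t ^ s = T ^ (s + 1) / (s + 1) := by
  rw [← intervalIntegral.integral_of_le hT, integral_rpow (Or.inl hs), zero_rpow (by linarith),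
    sub_zero]

theorem integral_eq_add_sum_of_eqOn {ι : Type*} {s : Set ℝ} (hs : MeasurableSet s)
    {f g : ℝ → ℝ} {h : ι → ℝ → ℝ} {I : Finset ι}
    (heq : EqOn f (fun t => g t + ∑ j ∈ I, h j t) s) (hg : IntegrableOn g s)
    (hh : ∀ j ∈ I, IntegrableOn (h j) s) :
    IntegrableOn f s ∧ ∫ t in s, f t = (∫ t in s, g t) + ∑ j ∈ I, ∫ t in s, h j t := by
  have hsum : IntegrableOn (fun t => ∑ j ∈ I, h j t) s := integrable_finsetSum I hh
  refine ⟨(hg.add hsum).congr_fun heq.symm hs, ?_⟩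
  rw [setIntegral_congr_fun hs heq, integral_add hg hsum, integral_finsetSum I hh]

/-- `T^{2j-α} / (2j-α)` is `∫₀^T t^{2j-1-α} dt` when `2j > α` and `-∫_T^∞ t^{2j-1-α} dt` when
`2j < α`. -/
noncomputable def approxCoeff (α T : ℝ) (j : ℕ) : ℝ :=
  (-1) ^ j * T ^ (2 * j - α) / ((2 * j)! * (2 * j - α))

variable {α T x : ℝ}

theorem cosTerm_comp_mul_mul_rpow (j : ℕ) (p : ℝ) {t : ℝ} (ht : 0 < t) :
    cosTerm j (x * t) * t ^ p = (-1) ^ j * x ^ (2 * j) / (2 * j)! * t ^ (2 * j + p) := by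
  rw [rpow_add ht, show (2 * j : ℝ) = ((2 * j : ℕ) : ℝ) by push_cast; ring, rpow_natCast,
    cosTerm, mul_pow]
  ring

theorem integral_Ioc_cosTerm_comp_mul_mul_rpow {j : ℕ} (hj : α < 2 * j) (hT : 0 ≤ T) :
    IntegrableOn (fun t => cosTerm j (x * t) * t ^ (-1 - α)) (Ioc 0 T) ∧
      ∫ t in Ioc 0 T, cosTerm j (x * t) * t ^ (-1 - α) = approxCoeff α T j * x ^ (2 * j) := by
  have hs : -1 < 2 * j + (-1 - α) := by linarith
  have heq : EqOn (fun t => cosTerm j (x * t) * t ^ (-1 - α))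
      (fun t => (-1) ^ j * x ^ (2 * j) / (2 * j)! * t ^ (2 * j + (-1 - α))) (Ioc 0 T) :=
    fun t ht => cosTerm_comp_mul_mul_rpow j _ ht.1
  refine ⟨IntegrableOn.congr_fun ((intervalIntegrable_iff_integrableOn_Ioc_of_le hT).mp
    ((intervalIntegral.intervalIntegrable_rpow' hs).const_mul _)) heq.symm measurableSet_Ioc, ?_⟩
  rw [setIntegral_congr_fun measurableSet_Ioc heq, integral_const_mul,
    integral_Ioc_zero_rpow hs hT, approxCoeff,
    show (2 * j + (-1 - α) + 1 : ℝ) = 2 * j - α by ring]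
  field_simp

theorem integral_Ioi_cosTerm_comp_mul_mul_rpow {j : ℕ} (hj : 2 * j < α) (hT : 0 < T) :
    IntegrableOn (fun t => -(cosTerm j (x * t) * t ^ (-1 - α))) (Ioi T) ∧
      ∫ t in Ioi T, -(cosTerm j (x * t) * t ^ (-1 - α)) = approxCoeff α T j * x ^ (2 * j) := by
  have hs : 2 * j + (-1 - α) < -1 := by linarith
  have heq : EqOn (fun t => -(cosTerm j (x * t) * t ^ (-1 - α)))
      (fun t => -((-1) ^ j * x ^ (2 * j) / (2 * j)!) * t ^ (2 * j + (-1 - α))) (Ioi T) :=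
    fun t ht => by
      dsimp only
      rw [cosTerm_comp_mul_mul_rpow j _ (hT.trans ht), neg_mul]
  refine ⟨IntegrableOn.congr_fun ((integrableOn_Ioi_rpow_of_lt hs hT).const_mul _) heq.symm
    measurableSet_Ioi, ?_⟩
  rw [setIntegral_congr_fun measurableSet_Ioi heq, integral_const_mul,
    integral_Ioi_rpow_of_lt hs hT, approxCoeff,
    show (2 * j + (-1 - α) + 1 : ℝ) = 2 * j - α by ring]
  have : (2 * j : ℝ) - α ≠ 0 := by linarith
  field_simp

theorem cosRem_eq_cosRem_add_sum {m N : ℕ} (h : m ≤ N) (v : ℝ) :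
    cosRem m v = cosRem N v + ∑ j ∈ Finset.Ico m N, cosTerm j v := by
  rw [cosRem, cosRem, cosTaylor, cosTaylor, ← Finset.sum_range_add_sum_Ico _ h]
  ring

theorem abs_cos_mul_rpow_le (x p : ℝ) {t : ℝ} (ht : 0 < t) : |cos (x * t) * t ^ p| ≤ t ^ p := by
  rw [abs_mul, abs_of_pos (rpow_pos_of_pos ht p)]
  exact mul_le_of_le_one_left (rpow_pos_of_pos ht p).le (abs_cos_le_one _)

theorem integrableOn_Ioc_cosRem_comp_mul_mul_rpow (N : ℕ) (hα : α < 2 * N) (hx₀ : 0 ≤ x)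
    (hx₁ : x ≤ 1) (hT : 0 ≤ T) :
    IntegrableOn (fun t => cosRem N (x * t) * t ^ (-1 - α)) (Ioc 0 T) :=
  integrableOn_Ioc_zero_of_abs_le_rpow
    (continuousOn_mul_rpow ((continuous_cosRem N).comp (continuous_const_mul x)) _)
    (a := 2 * N + (-1 - α)) (by linarith) hT
    fun _ ht => abs_cosRem_comp_mul_mul_rpow_le N _ hx₀ hx₁ ht.1

theorem abs_integral_Ioc_cosRem_comp_mul_mul_rpow_le (N : ℕ) (hα : α < 2 * N) (hx₀ : 0 ≤ x)
    (hx₁ : x ≤ 1) (hT : 0 ≤ T) :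
    |∫ t in Ioc 0 T, cosRem N (x * t) * t ^ (-1 - α)|
      ≤ T ^ ((2 * N : ℕ) - α) / ((2 * N : ℕ) - α) / (2 * N)! := by
  have hs : -1 < 2 * N + (-1 - α) := by linarith
  have h := norm_integral_le_of_norm_le (f := fun t => cosRem N (x * t) * t ^ (-1 - α))
    ((intervalIntegrable_iff_integrableOn_Ioc_of_le hT).mp
      ((intervalIntegral.intervalIntegrable_rpow' hs).const_mul ((2 * N)! : ℝ)⁻¹))
    ((ae_restrict_iff' measurableSet_Ioc).2 (Eventually.of_forall
      fun t ht => abs_cosRem_comp_mul_mul_rpow_le N _ hx₀ hx₁ ht.1))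
  rw [integral_const_mul, integral_Ioc_zero_rpow hs hT] at h
  refine h.trans_eq ?_
  rw [show (2 * N + (-1 - α) + 1 : ℝ) = ((2 * N : ℕ) : ℝ) - α by push_cast; ring]
  ring

theorem integrableOn_Ioi_cos_comp_mul_mul_rpow (hα : 0 < α) (hT : 0 < T) :
    IntegrableOn (fun t => cos (x * t) * t ^ (-1 - α)) (Ioi T) :=
  integrableOn_Ioi_of_abs_le_rpow
    ((continuousOn_mul_rpow (continuous_cos.comp (continuous_const_mul x)) _).mono
      (Ioi_subset_Ioi hT.le)) (C := 1) (b := -1 - α) (by linarith) hT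
    fun _ ht => (abs_cos_mul_rpow_le x _ (hT.trans ht)).trans_eq (one_mul _).symm

theorem abs_integral_Ioi_cos_comp_mul_mul_rpow_le (hα : 0 < α) (hT : 0 < T) :
    |∫ t in Ioi T, cos (x * t) * t ^ (-1 - α)| ≤ T ^ (-α) / α := by
  have h := norm_integral_le_of_norm_le (f := fun t => cos (x * t) * t ^ (-1 - α))
    (integrableOn_Ioi_rpow_of_lt (by linarith) hT)
    ((ae_restrict_iff' measurableSet_Ioi).2 (Eventually.of_forall
      fun t ht => abs_cos_mul_rpow_le x (-1 - α) (hT.trans ht)))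
  rwa [integral_Ioi_rpow_of_lt (by linarith) hT, show -1 - α + 1 = -α by ring,
    neg_div_neg_eq] at h

variable {n J : ℕ}

theorem integral_Ioc_cosRem_comp_mul_mul_rpow (hα : α < 2 * n + 2) (hnJ : n ≤ J) (hx₀ : 0 ≤ x)
    (hx₁ : x ≤ 1) (hT : 0 ≤ T) :
    ∫ t in Ioc 0 T, cosRem (n + 1) (x * t) * t ^ (-1 - α)
      = (∫ t in Ioc 0 T, cosRem (J + 1) (x * t) * t ^ (-1 - α))
        + ∑ j ∈ Finset.Ico (n + 1) (J + 1), approxCoeff α T j * x ^ (2 * j) := by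
  have hterm : ∀ j ∈ Finset.Ico (n + 1) (J + 1), α < 2 * j := fun j hj => by
    have : (n + 1 : ℝ) ≤ j := by exact_mod_cast (Finset.mem_Ico.mp hj).1
    linarith
  have hJ : α < 2 * (J + 1 : ℕ) := by
    have : (n : ℝ) ≤ J := by exact_mod_cast hnJ
    push_cast; linarith
  rw [(integral_eq_add_sum_of_eqOn measurableSet_Ioc
    (g := fun t => cosRem (J + 1) (x * t) * t ^ (-1 - α))
    (h := fun j t => cosTerm j (x * t) * t ^ (-1 - α))
    (fun t _ => by simp only [cosRem_eq_cosRem_add_sum (by omega : n + 1 ≤ J + 1), add_mul,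
      Finset.sum_mul])
    (integrableOn_Ioc_cosRem_comp_mul_mul_rpow _ hJ hx₀ hx₁ hT)
    fun j hj => (integral_Ioc_cosTerm_comp_mul_mul_rpow (hterm j hj) hT).1).2]
  exact congrArg _ (Finset.sum_congr rfl fun j hj =>
    (integral_Ioc_cosTerm_comp_mul_mul_rpow (hterm j hj) hT).2)

theorem integral_Ioi_cosRem_comp_mul_mul_rpow (hα : 2 * n < α) (hT : 0 < T) :
    IntegrableOn (fun t => cosRem (n + 1) (x * t) * t ^ (-1 - α)) (Ioi T) ∧
      ∫ t in Ioi T, cosRem (n + 1) (x * t) * t ^ (-1 - α)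
        = (∫ t in Ioi T, cos (x * t) * t ^ (-1 - α))
          + ∑ j ∈ Finset.range (n + 1), approxCoeff α T j * x ^ (2 * j) := by
  have hterm : ∀ j ∈ Finset.range (n + 1), 2 * (j : ℝ) < α := fun j hj => by
    have : (j : ℝ) ≤ n := by exact_mod_cast Nat.lt_succ_iff.mp (Finset.mem_range.mp hj)
    linarith
  have h := integral_eq_add_sum_of_eqOn measurableSet_Ioi
    (f := fun t => cosRem (n + 1) (x * t) * t ^ (-1 - α))
    (g := fun t => cos (x * t) * t ^ (-1 - α))
    (h := fun j t => -(cosTerm j (x * t) * t ^ (-1 - α)))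
    (fun t _ => by
      simp only [cosRem, cosTaylor]
      rw [sub_mul, Finset.sum_mul, Finset.sum_neg_distrib, sub_eq_add_neg])
    (integrableOn_Ioi_cos_comp_mul_mul_rpow (lt_of_le_of_lt (by positivity) hα) hT)
    fun j hj => (integral_Ioi_cosTerm_comp_mul_mul_rpow (x := x) (hterm j hj) hT).1
  refine ⟨h.1, h.2.trans (congrArg _ (Finset.sum_congr rfl fun j hj =>
    (integral_Ioi_cosTerm_comp_mul_mul_rpow (hterm j hj) hT).2))⟩

theorem cosRemMellin_mul_rpow_sub_sum (hlo : 2 * n < α) (hhi : α < 2 * n + 2) (hnJ : n ≤ J)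
    (hx₀ : 0 ≤ x) (hx₁ : x ≤ 1) (hT : 0 < T) :
    cosRemMellin (n + 1) α * x ^ α - ∑ j ∈ Finset.range (J + 1), approxCoeff α T j * x ^ (2 * j)
      = (∫ t in Ioc 0 T, cosRem (J + 1) (x * t) * t ^ (-1 - α))
        + ∫ t in Ioi T, cos (x * t) * t ^ (-1 - α) := by
  have hα : 0 < α := lt_of_le_of_lt (by positivity) hlo
  obtain ⟨hint_Ioi, hIoi⟩ := integral_Ioi_cosRem_comp_mul_mul_rpow (x := x) hlo hT
  have hint_Ioc := integrableOn_Ioc_cosRem_comp_mul_mul_rpow (α := α) (n + 1)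
    (by push_cast; linarith) hx₀ hx₁ hT.le
  rw [cosRemMellin, mul_comm, ← integral_comp_mul_mul_rpow (cosRem_succ_zero n) hα.ne' hx₀,
    ← Ioc_union_Ioi_eq_Ioi hT.le,
    setIntegral_union (Ioc_disjoint_Ioi le_rfl) measurableSet_Ioi hint_Ioc hint_Ioi,
    integral_Ioc_cosRem_comp_mul_mul_rpow hhi hnJ hx₀ hx₁ hT.le, hIoi,
    ← Finset.sum_range_add_sum_Ico _ (by omega : n + 1 ≤ J + 1)]
  ring

theorem abs_cosRemMellin_mul_rpow_sub_sum_le (hlo : 2 * n < α) (hhi : α < 2 * n + 2)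
    (hnJ : n ≤ J) (hx₀ : 0 ≤ x) (hx₁ : x ≤ 1) (hT : 0 < T) :
    |cosRemMellin (n + 1) α * x ^ α - ∑ j ∈ Finset.range (J + 1), approxCoeff α T j * x ^ (2 * j)|
      ≤ T ^ ((2 * (J + 1) : ℕ) - α) / ((2 * (J + 1) : ℕ) - α) / (2 * (J + 1))!
        + T ^ (-α) / α := by
  have hα : 0 < α := lt_of_le_of_lt (by positivity) hlo
  have hJ : α < 2 * (J + 1 : ℕ) := by
    have : (n : ℝ) ≤ J := by exact_mod_cast hnJ
    push_cast; linarith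
  rw [cosRemMellin_mul_rpow_sub_sum hlo hhi hnJ hx₀ hx₁ hT]
  exact (abs_add_le _ _).trans
    (add_le_add (abs_integral_Ioc_cosRem_comp_mul_mul_rpow_le _ hJ hx₀ hx₁ hT.le)
      (abs_integral_Ioi_cos_comp_mul_mul_rpow_le hα hT))

end MainEstimate

section Approximation

theorem pow_div_factorial_le_one {T : ℝ} {N : ℕ} (hT : 0 ≤ T) (h : exp 1 * T ≤ N) :
    T ^ N / N ! ≤ 1 := by
  have hN : exp 1 ^ N = exp N := by rw [← exp_nat_mul, mul_one]
  calc T ^ N / N ! = (exp 1 * T) ^ N / N ! / exp 1 ^ N := by rw [mul_pow]; field_simp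
    _ ≤ exp (exp 1 * T) / exp 1 ^ N := by
      gcongr; exact pow_div_factorial_le_exp _ (by positivity) N
    _ ≤ exp N / exp 1 ^ N := by gcongr
    _ = 1 := by rw [hN, div_self (exp_pos _).ne']

theorem rpow_sub_div_div_factorial_le {α T : ℝ} {N : ℕ} (hT : 0 < T) (hN : α + 1 ≤ N)
    (heT : exp 1 * T ≤ N) : T ^ ((N : ℝ) - α) / (N - α) / N ! ≤ T ^ (-α) := by
  rw [sub_eq_add_neg (N : ℝ), rpow_add hT, rpow_natCast]
  calc T ^ N * T ^ (-α) / (N + -α) / N ! = T ^ N / N ! * T ^ (-α) / (N - α) := by ring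
    _ ≤ 1 * T ^ (-α) / 1 := by
      gcongr
      · exact pow_div_factorial_le_one hT.le heT
      · linarith
    _ = T ^ (-α) := by ring

noncomputable def approxPoly (α T K : ℝ) (J : ℕ) : ℝ[X] :=
  ∑ j ∈ Finset.range (J + 1), C (approxCoeff α T j / K) * X ^ (2 * j)

variable {α T K : ℝ} {n J : ℕ}

theorem degree_approxPoly_le : (approxPoly α T K J).degree ≤ (2 * J : ℕ) := by
  refine (degree_sum_le _ _).trans (Finset.sup_le fun j hj => ?_)
  refine (degree_C_mul_X_pow_le _ _).trans ?_
  have := Finset.mem_range.mp hj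
  exact_mod_cast (by omega : 2 * j ≤ 2 * J)

theorem eval_approxPoly (y : ℝ) :
    (approxPoly α T K J).eval y
      = (∑ j ∈ Finset.range (J + 1), approxCoeff α T j * |y| ^ (2 * j)) / K := by
  simp only [approxPoly, eval_finsetSum, eval_mul, eval_C, eval_pow, eval_X, Finset.sum_div,
    pow_mul, sq_abs]
  exact Finset.sum_congr rfl fun j _ => by ring

theorem abs_rpow_sub_eval_approxPoly_le (hlo : 2 * n < α) (hhi : α < 2 * n + 2) (hnJ : n ≤ J)
    (hT : 0 < T) (hN : α + 1 ≤ (2 * (J + 1) : ℕ)) (heT : exp 1 * T ≤ (2 * (J + 1) : ℕ))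
    {y : ℝ} (hy : |y| ≤ 1) :
    |(|y| ^ α) - (approxPoly α T (cosRemMellin (n + 1) α) J).eval y|
      ≤ (1 + α⁻¹) / |cosRemMellin (n + 1) α| * T ^ (-α) := by
  have hα : 0 < α := lt_of_le_of_lt (by positivity) hlo
  have hK := cosRemMellin_succ_ne_zero hlo hhi
  rw [eval_approxPoly, ← mul_div_cancel_left₀ (|y| ^ α) hK, ← sub_div, abs_div,
    div_le_iff₀ (abs_pos.mpr hK)]
  calc _ ≤ _ := abs_cosRemMellin_mul_rpow_sub_sum_le hlo hhi hnJ (abs_nonneg y) hy hT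
    _ ≤ T ^ (-α) + T ^ (-α) / α := by
      gcongr; exact rpow_sub_div_div_factorial_le hT hN heT
    _ = _ := by field_simp

end Approximation

theorem ratErr_nonneg (f : ℝ → ℝ) (a b : ℝ) (m n : ℕ) : 0 ≤ ratErr f a b m n :=
  sInf_nonneg fun _ ⟨_, _, _, _, _, he⟩ => he ▸ iSup_nonneg fun _ => abs_nonneg _

theorem ratErr_le_of_abs_sub_le {f : ℝ → ℝ} {a b ε : ℝ} {m : ℕ} (n : ℕ) {p : ℝ[X]} (hab : a ≤ b)
    (hp : p.degree ≤ m) (h : ∀ x ∈ Set.Icc a b, |f x - p.eval x| ≤ ε) :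
    ratErr f a b m n ≤ ε := by
  have : Nonempty (Icc a b) := ⟨⟨a, left_mem_Icc.mpr hab⟩⟩
  refine csInf_le_of_le ⟨0, fun _ ⟨_, _, _, _, _, he⟩ => he ▸ iSup_nonneg fun _ => abs_nonneg _⟩
    ⟨p, C 1, hp, degree_C_le.trans (by exact_mod_cast Nat.zero_le n), by simp, rfl⟩
    (ciSup_le fun x => by simpa using h x x.2)

theorem exists_two_mul_lt_lt {α : ℝ} (hα : 0 < α) (hαn : ∀ k : ℕ, α ≠ k) :
    ∃ n : ℕ, 2 * n < α ∧ α < 2 * n + 2 := by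
  refine ⟨⌊α / 2⌋₊, lt_of_le_of_ne ?_ ?_, ?_⟩
  · linarith [Nat.floor_le (div_nonneg hα.le zero_le_two) (a := α / 2)]
  · exact_mod_cast (hαn (2 * ⌊α / 2⌋₊)).symm
  · linarith [Nat.lt_floor_add_one (α / 2)]

theorem stmt10 (α : ℝ) (hα : 0 < α) (hαn : ∀ k : ℕ, α ≠ k) :
    (fun m : ℕ => ratErr (fun x => |x| ^ α) (-1) 1 m 0)
      =O[atTop] (fun m : ℕ => (m : ℝ) ^ (-α)) := by
  obtain ⟨n, hlo, hhi⟩ := exists_two_mul_lt_lt hα hαn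
  refine Asymptotics.IsBigO.of_bound ((1 + α⁻¹) / |cosRemMellin (n + 1) α| * 3 ^ α) ?_
  filter_upwards [eventually_ge_atTop ⌈α⌉₊] with m hceil
  have hαm : α ≤ m := Nat.ceil_le.mp hceil
  have hm : (0 : ℝ) < m := hα.trans_le hαm
  have hJ : (m : ℝ) + 1 ≤ (2 * (m / 2 + 1) : ℕ) := by
    exact_mod_cast (by omega : m + 1 ≤ 2 * (m / 2 + 1))
  have hnJ : n ≤ m / 2 := by
    have : 2 * n < m := by exact_mod_cast hlo.trans_le hαm
    omega
  rw [norm_of_nonneg (ratErr_nonneg _ _ _ _ _), norm_of_nonneg (rpow_nonneg hm.le _)]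
  refine ratErr_le_of_abs_sub_le 0 (by norm_num)
    (p := approxPoly α (m / 3) (cosRemMellin (n + 1) α) (m / 2))
    (degree_approxPoly_le.trans (by exact_mod_cast (by omega : 2 * (m / 2) ≤ m))) fun y hy => ?_
  refine (abs_rpow_sub_eval_approxPoly_le hlo hhi hnJ (by positivity) (by linarith)
    (by nlinarith [exp_one_lt_d9]) (abs_le.mpr hy)).trans_eq ?_
  rw [div_rpow hm.le (by norm_num), rpow_neg (by norm_num : (0 : ℝ) ≤ 3), div_inv_eq_mul]
  ring
end
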